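/- arXiv:2303.17344 — 9 statements merged into one kernel-verified Lean document; each statement's English description precedes it below -/
import Mathlib

section
/- Let p be a prime. There exists a unique Witt vector y ∈ W(ℤ_p) such that p = [p] + V(y) in W(ℤ_p) (where p on the left denotes the element p·1 of W(ℤ_p)). Moreover, this y has ghost components w_n(y) = 1 − p^{p^{n+1}−1} for every n ≥ 0. -/
open WittVector

/-- Let `p` be a prime. There exists a unique Witt vector `y ∈ W(ℤ_p)` such that
`p = [p] + V(y)` in `W(ℤ_p)`. Moreover, this `y` has ghost components
`w_n(y) = 1 − p^(p^(n+1) − 1)` for every `n ≥ 0`. -/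
theorem stmt0 (p : ℕ) [Fact p.Prime] :
    (∃! y : WittVector p ℤ_[p],
      (p : WittVector p ℤ_[p]) = teichmuller p (p : ℤ_[p]) + verschiebung y) ∧
    (∀ y : WittVector p ℤ_[p],
      (p : WittVector p ℤ_[p]) = teichmuller p (p : ℤ_[p]) + verschiebung y →
      ∀ n : ℕ, ghostComponent n y = 1 - (p : ℤ_[p]) ^ (p ^ (n + 1) - 1)) := by
  have hVinj : Function.Injective (verschiebung : WittVector p ℤ_[p] → WittVector p ℤ_[p]) := by
    intro a b h
    ext n
    have := congrArg (fun z : WittVector p ℤ_[p] => z.coeff n.succ) h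
    simpa [verschiebung_coeff_succ] using this
  constructor
  · set x : WittVector p ℤ_[p] := (p : WittVector p ℤ_[p]) - teichmuller p (p : ℤ_[p]) with hx
    have hx0 : x.coeff 0 = 0 := by
      have : constantCoeff x = 0 := by
        rw [hx, map_sub, map_natCast, WittVector.constantCoeff_apply, teichmuller_coeff_zero,
          sub_self]
      simpa [WittVector.constantCoeff_apply] using this
    refine ⟨WittVector.mk p (fun n => x.coeff (n + 1)), ?_, ?_⟩
    · have hVy : verschiebung (WittVector.mk p (fun n => x.coeff (n + 1))) = x := by
        ext n
        cases n with
        | zero => rw [verschiebung_coeff_zero, hx0]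
        | succ m => rw [verschiebung_coeff_succ]; rfl
      show (p : WittVector p ℤ_[p]) = teichmuller p (p : ℤ_[p]) + verschiebung _
      rw [hVy, hx]; ring
    · intro z hz
      apply hVinj
      have : verschiebung (WittVector.mk p (fun n => x.coeff (n + 1))) = x := by
        ext n
        cases n with
        | zero => rw [verschiebung_coeff_zero, hx0]
        | succ m => rw [verschiebung_coeff_succ]; rfl
      rw [this, hx]
      linear_combination -hz
  · intro y hy n
    have hp0 : (p : ℤ_[p]) ≠ 0 := by
      exact_mod_cast (Nat.cast_ne_zero (R := ℤ_[p])).mpr (Fact.out : p.Prime).ne_zero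
    have h := congrArg (ghostComponent (p := p) (n + 1)) hy
    rw [map_add, ghostComponent_teichmuller, ghostComponent_verschiebung, map_natCast] at h
    apply mul_left_cancel₀ hp0
    have hpow : 1 ≤ p ^ (n + 1) := Nat.one_le_pow _ _ (Fact.out : p.Prime).pos
    have : (p : ℤ_[p]) ^ (p ^ (n + 1)) = p * (p : ℤ_[p]) ^ (p ^ (n + 1) - 1) := by
      rw [← pow_succ']
      congr 1
      omega
    rw [mul_sub, mul_one, ← this]
    linear_combination -h
end

section
/- Let p be an odd prime. Then there exists x ∈ W(ℤ_p) such that x is a unit of W(ℤ_p) and p = [p] + V(F(x)) in W(ℤ_p). In particular, the unique y ∈ W(ℤ_p) with p = [p] + V(y) lies in the image of the Frobenius F and is itself a unit of W(ℤ_p). -/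
/-!
Comparing ghost components, `p = [p] + V(F x)` says `w_0(x)` is free and
`w_n(x) = 1 - p ^ (p ^ n - 1)` for `n ≥ 1`; taking `w_0(x) = 1`, all of these are units of
`ℤ_p`.
Over `ℤ_p` every sequence with `w_{n+1} ≡ w_n mod p ^ (n + 1)` is the ghost sequence of a Witt
vector (Dwork's lemma: solve for the coordinates in `W(ℚ_p)` and show inductively that they are
integral), and for odd `p` this sequence satisfies these congruences. A Witt vector over `ℤ_p`
whose ghost components are units is a unit, because the inverse ghost sequence satisfies the
same congruences. Finally `V` is injective, so any `y` with `p = [p] + V(y)` equals `F x`.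
-/

open WittVector Finset

namespace WittVector

variable {p : ℕ} [Fact p.Prime] {R S : Type*} [CommRing R] [CommRing S]

local notation "𝕎" => WittVector p

theorem ghostComponent_map (f : R →+* S) (x : 𝕎 R) (n : ℕ) :
    ghostComponent n (map f x) = f (ghostComponent n x) := by
  simp [ghostComponent_apply, aeval_wittPolynomial, map_coeff]

theorem ghostComponent_congr {x y : 𝕎 R} {n : ℕ} (h : ∀ i ≤ n, x.coeff i = y.coeff i) :
    ghostComponent n x = ghostComponent n y := by
  simp only [ghostComponent_apply, aeval_wittPolynomial]
  exact sum_congr rfl fun i hi => by rw [h i (Nat.lt_succ_iff.mp (mem_range.mp hi))]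

theorem ghostComponent_succ_sub_congr {x y : 𝕎 R} {n : ℕ}
    (h : ∀ i ≤ n, x.coeff i = y.coeff i) :
    ghostComponent (n + 1) x - p ^ (n + 1) * x.coeff (n + 1) =
      ghostComponent (n + 1) y - p ^ (n + 1) * y.coeff (n + 1) := by
  simp only [ghostComponent_apply, aeval_wittPolynomial, sum_range_succ _ (n + 1), Nat.sub_self,
    pow_zero, pow_one, add_sub_cancel_right]
  exact sum_congr rfl fun i hi => by rw [h i (Nat.lt_succ_iff.mp (mem_range.mp hi))]

end WittVector

namespace PadicInt

variable {p : ℕ} [Fact p.Prime]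

theorem p_dvd_pow_sub_self (c : ℤ_[p]) : (p : ℤ_[p]) ∣ c ^ p - c := by
  rw [← Ideal.mem_span_singleton, ← maximalIdeal_eq_span_p, ← ker_toZMod, RingHom.mem_ker]
  simp [ZMod.pow_card]

theorem pow_dvd_pow_pow_succ_sub_pow_pow (c : ℤ_[p]) (k : ℕ) :
    (p : ℤ_[p]) ^ (k + 1) ∣ c ^ p ^ (k + 1) - c ^ p ^ k := by
  simpa [← pow_mul, ← pow_succ'] using dvd_sub_pow_of_dvd_sub (p_dvd_pow_sub_self c) k

theorem isUnit_one_sub_p_pow {k : ℕ} (hk : k ≠ 0) : IsUnit (1 - (p : ℤ_[p]) ^ k) := by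
  refine IsLocalRing.isUnit_one_sub_self_of_mem_nonunits _ ?_
  rw [mem_nonunits_iff, isUnit_pow_iff hk]
  exact p_nonunit

end PadicInt

namespace WittVector

variable {p : ℕ} [Fact p.Prime]

local notation "𝕎" => WittVector p

theorem pow_dvd_ghostComponent_succ_sub (x : 𝕎 ℤ_[p]) (n : ℕ) :
    (p : ℤ_[p]) ^ (n + 1) ∣ ghostComponent (n + 1) x - ghostComponent n x := by
  have hsplit : ghostComponent (n + 1) x - ghostComponent n x =
      p ^ (n + 1) * x.coeff (n + 1) + ∑ i ∈ range (n + 1),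
        (p : ℤ_[p]) ^ i * (x.coeff i ^ p ^ (n - i + 1) - x.coeff i ^ p ^ (n - i)) := by
    simp only [ghostComponent_apply, aeval_wittPolynomial, sum_range_succ _ (n + 1), Nat.sub_self,
      pow_zero, pow_one, mul_sub, sum_sub_distrib]
    rw [sum_congr rfl fun i hi => by rw [Nat.sub_add_comm (Nat.lt_succ_iff.mp (mem_range.mp hi))]]
    ring
  rw [hsplit]
  refine dvd_add (dvd_mul_right _ _) (dvd_sum fun i hi => ?_)
  have hi : i ≤ n := Nat.lt_succ_iff.mp (mem_range.mp hi)
  rw [show n + 1 = i + (n - i + 1) by omega, pow_add]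
  exact mul_dvd_mul_left _ (PadicInt.pow_dvd_pow_pow_succ_sub_pow_pow _ _)

theorem ghostMap_injective_padicInt :
    Function.Injective (ghostMap : 𝕎 ℤ_[p] → ℕ → ℤ_[p]) := by
  intro x y h
  have : Invertible (p : ℚ_[p]) := invertibleOfNonzero (NeZero.ne _)
  refine map_injective PadicInt.Coe.ringHom Subtype.coe_injective
    ((ghostMap.bijective_of_invertible p ℚ_[p]).1 ?_)
  funext n
  simp only [ghostMap_apply, ghostComponent_map]
  exact congrArg _ (congrFun h n)

theorem norm_coeff_le_one_of_ghostComponent_eq (X : 𝕎 ℚ_[p]) (g : ℕ → ℤ_[p])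
    (hg : ∀ n, (p : ℤ_[p]) ^ (n + 1) ∣ g (n + 1) - g n)
    (hX : ∀ n, ghostComponent n X = PadicInt.Coe.ringHom (g n)) (n : ℕ) :
    ‖X.coeff n‖ ≤ 1 := by
  -- `x` agrees with `X` on every coordinate that is already known to be integral
  set x : 𝕎 ℤ_[p] :=
    mk p fun i => if h : ‖X.coeff i‖ ≤ 1 then (⟨X.coeff i, h⟩ : ℤ_[p]) else 0
  have hxX {i : ℕ} (h : ‖X.coeff i‖ ≤ 1) :
      (map PadicInt.Coe.ringHom x).coeff i = X.coeff i := by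
    simp only [x, map_coeff, coeff_mk, h, ↓reduceDIte]
    rfl
  induction n using Nat.strong_induction_on with
  | _ n ih =>
  cases n with
  | zero =>
    have h0 := hX 0
    simp only [ghostComponent_apply, wittPolynomial_zero, MvPolynomial.aeval_X] at h0
    rw [h0]
    exact (g 0).2
  | succ m =>
  have hagree (i : ℕ) (hi : i ≤ m) : (map PadicInt.Coe.ringHom x).coeff i = X.coeff i :=
    hxX (ih i (Nat.lt_succ_of_le hi))
  have hm : PadicInt.Coe.ringHom (ghostComponent m x) = PadicInt.Coe.ringHom (g m) := by
    rw [← hX, ← ghostComponent_congr hagree, ghostComponent_map]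
  have hsucc := ghostComponent_succ_sub_congr hagree
  rw [ghostComponent_map, hX, map_coeff] at hsucc
  obtain ⟨d, hd⟩ := dvd_sub (hg m) (pow_dvd_ghostComponent_succ_sub x m)
  have hd' := congrArg PadicInt.Coe.ringHom hd
  simp only [map_sub, map_mul, map_pow, map_natCast] at hd'
  have hcoeff : X.coeff (m + 1) = PadicInt.Coe.ringHom (d + x.coeff (m + 1)) := by
    refine mul_left_cancel₀ (pow_ne_zero (m + 1) (NeZero.ne (p : ℚ_[p]))) ?_
    rw [map_add]
    linear_combination hsucc + hd' - hm
  rw [hcoeff]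
  exact (d + x.coeff (m + 1)).2

theorem exists_ghostComponent_eq_of_pow_dvd (g : ℕ → ℤ_[p])
    (hg : ∀ n, (p : ℤ_[p]) ^ (n + 1) ∣ g (n + 1) - g n) :
    ∃ x : 𝕎 ℤ_[p], ∀ n, ghostComponent n x = g n := by
  have : Invertible (p : ℚ_[p]) := invertibleOfNonzero (NeZero.ne _)
  set X := (ghostEquiv p ℚ_[p]).symm fun n => PadicInt.Coe.ringHom (g n)
  have hX (n : ℕ) : ghostComponent n X = PadicInt.Coe.ringHom (g n) :=
    congrFun ((ghostEquiv p ℚ_[p]).apply_symm_apply _) n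
  have hint := norm_coeff_le_one_of_ghostComponent_eq X g hg hX
  set x : 𝕎 ℤ_[p] := mk p fun n => ⟨X.coeff n, hint n⟩
  have hx : map PadicInt.Coe.ringHom x = X := by
    ext n
    rfl
  refine ⟨x, fun n => Subtype.coe_injective ?_⟩
  rw [← hx] at hX
  exact (ghostComponent_map _ x n).symm.trans (hX n)

theorem isUnit_of_forall_isUnit_ghostComponent {x : 𝕎 ℤ_[p]}
    (hx : ∀ n, IsUnit (ghostComponent n x)) : IsUnit x := by
  set g : ℕ → ℤ_[p] := fun n => ↑(hx n).unit⁻¹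
  have hmul (n : ℕ) : ghostComponent n x * g n = 1 := (hx n).mul_val_inv
  have hg (n : ℕ) : (p : ℤ_[p]) ^ (n + 1) ∣ g (n + 1) - g n := by
    have key : g (n + 1) - g n =
        (ghostComponent n x - ghostComponent (n + 1) x) * (g n * g (n + 1)) := by
      linear_combination (-g (n + 1)) * hmul n + g n * hmul (n + 1)
    rw [key, ← neg_sub]
    exact (dvd_neg.mpr (pow_dvd_ghostComponent_succ_sub x n)).mul_right _
  obtain ⟨u, hu⟩ := exists_ghostComponent_eq_of_pow_dvd g hg
  refine IsUnit.of_mul_eq_one u (ghostMap_injective_padicInt (funext fun n => ?_))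
  simp only [ghostMap_apply, map_mul, map_one, hu, hmul]

end WittVector

noncomputable def defectGhost (p : ℕ) [Fact p.Prime] : ℕ → ℤ_[p]
  | 0 => 1
  | n + 1 => 1 - p ^ (p ^ (n + 1) - 1)

section

variable {p : ℕ} [Fact p.Prime]

theorem isUnit_defectGhost (n : ℕ) : IsUnit (defectGhost p n) := by
  cases n with
  | zero => exact isUnit_one
  | succ n =>
    have : 2 ≤ p ^ (n + 1) :=
      (Fact.out : p.Prime).two_le.trans (Nat.le_self_pow n.succ_ne_zero p)
    exact PadicInt.isUnit_one_sub_p_pow (by omega)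

theorem pow_dvd_defectGhost_succ_sub (hp : Odd p) (n : ℕ) :
    (p : ℤ_[p]) ^ (n + 1) ∣ defectGhost p (n + 1) - defectGhost p n := by
  have hp3 : 3 ≤ p := by
    have := (Fact.out : p.Prime).two_le
    have := Nat.odd_iff.mp hp
    omega
  cases n with
  | zero =>
    rw [defectGhost, defectGhost, sub_sub_cancel_left, zero_add, pow_one, pow_one, dvd_neg]
    exact dvd_pow_self _ (by omega)
  | succ n =>
    have hlt : n + 3 ≤ p ^ (n + 1) := by
      have := Nat.lt_pow_self (n := n) (by omega : 1 < p)
      rw [pow_succ]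
      nlinarith
    have hle : p ^ (n + 1) ≤ p ^ (n + 1 + 1) := Nat.pow_le_pow_right (by omega) (by omega)
    rw [defectGhost, defectGhost, sub_sub_sub_cancel_left]
    exact dvd_sub (pow_dvd_pow _ (by omega)) (pow_dvd_pow _ (by omega))

theorem natCast_eq_teichmuller_add_verschiebung_frobenius {x : WittVector p ℤ_[p]}
    (hx : ∀ n, ghostComponent n x = defectGhost p n) :
    (p : WittVector p ℤ_[p]) = teichmuller p (p : ℤ_[p]) + verschiebung (frobenius x) := by
  refine ghostMap_injective_padicInt (funext fun n => ?_)
  cases n with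
  | zero => simp [ghostComponent_teichmuller, ghostComponent_zero_verschiebung]
  | succ n =>
    have hpos : 1 ≤ p ^ (n + 1) := Nat.one_le_pow _ _ (Fact.out : p.Prime).pos
    simp only [ghostMap_apply, map_natCast, map_add, ghostComponent_teichmuller,
      ghostComponent_verschiebung, ghostComponent_frobenius, hx, defectGhost]
    have hsplit : (p : ℤ_[p]) ^ p ^ (n + 1) = p * p ^ (p ^ (n + 1) - 1) := by
      rw [← pow_succ', Nat.sub_add_cancel hpos]
    rw [hsplit]
    ring

end

/-- Let `p` be an odd prime. Then there exists a unit `x ∈ W(ℤ_p)` with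
`p = [p] + V(F(x))` in `W(ℤ_p)`. In particular, the unique `y` with `p = [p] + V(y)`
lies in the image of the Frobenius `F` and is itself a unit of `W(ℤ_p)`. -/
theorem stmt1 (p : ℕ) [Fact p.Prime] (hp : Odd p) :
    (∃ x : WittVector p ℤ_[p], IsUnit x ∧
      (p : WittVector p ℤ_[p]) = teichmuller p (p : ℤ_[p]) + verschiebung (frobenius x)) ∧
    (∀ y : WittVector p ℤ_[p],
      (p : WittVector p ℤ_[p]) = teichmuller p (p : ℤ_[p]) + verschiebung y →
      (∃ x : WittVector p ℤ_[p], frobenius x = y) ∧ IsUnit y) := by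
  obtain ⟨x, hx⟩ :=
    exists_ghostComponent_eq_of_pow_dvd (defectGhost p) (pow_dvd_defectGhost_succ_sub hp)
  have hxunit : IsUnit x :=
    isUnit_of_forall_isUnit_ghostComponent fun n => hx n ▸ isUnit_defectGhost n
  have heq := natCast_eq_teichmuller_add_verschiebung_frobenius hx
  refine ⟨⟨x, hxunit, heq⟩, fun y hy => ?_⟩
  have hFy : frobenius x = y := verschiebung_injective p _ (add_left_cancel (heq.symm.trans hy))
  exact ⟨⟨x, hFy⟩, hFy ▸ hxunit.map WittVector.frobenius⟩
end

section
/- For p = 2, there is no x ∈ W(ℤ_2) with 2 = [2] + V(F(x)) in W(ℤ_2); that is, the unique y ∈ W(ℤ_2) satisfying 2 = [2] + V(y) is not in the image of the Frobenius F : W(ℤ_2) → W(ℤ_2). -/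
open WittVector

private lemma key_zmod : ∀ a b c : ZMod (2^3), a^2 + 2*b = -1 → a^4 + 2*b^2 + 4*c = -7 → False := by
  decide

private lemma key (a b c : ℤ_[2]) (h1 : a^2 + 2*b = -1) (h2 : a^4 + 2*b^2 + 4*c = -7) : False := by
  have e1 := congrArg (PadicInt.toZModPow (p := 2) 3) h1
  have e2 := congrArg (PadicInt.toZModPow (p := 2) 3) h2
  simp only [map_add, map_mul, map_pow, map_neg, map_one, map_ofNat] at e1 e2
  exact key_zmod _ _ _ e1 e2

private lemma ghost1 (x : WittVector 2 ℤ_[2]) :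
    ghostComponent 1 x = x.coeff 0 ^ 2 + 2 * x.coeff 1 := by
  rw [ghostComponent_apply, aeval_wittPolynomial]
  simp only [Finset.sum_range_succ, Finset.sum_range_zero]
  norm_num

private lemma ghost2 (x : WittVector 2 ℤ_[2]) :
    ghostComponent 2 x = x.coeff 0 ^ 4 + 2 * x.coeff 1 ^ 2 + 4 * x.coeff 2 := by
  rw [ghostComponent_apply, aeval_wittPolynomial]
  simp only [Finset.sum_range_succ, Finset.sum_range_zero]
  norm_num

/-- For `p = 2`, there is no `x ∈ W(ℤ_2)` with `2 = [2] + V(F(x))` in `W(ℤ_2)`;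
that is, the unique `y ∈ W(ℤ_2)` satisfying `2 = [2] + V(y)` is not in the image of
the Frobenius `F : W(ℤ_2) → W(ℤ_2)`. -/
theorem stmt2 :
    (¬ ∃ x : WittVector 2 ℤ_[2],
      (2 : WittVector 2 ℤ_[2]) = teichmuller 2 (2 : ℤ_[2]) + verschiebung (frobenius x)) ∧
    (∀ y : WittVector 2 ℤ_[2],
      (2 : WittVector 2 ℤ_[2]) = teichmuller 2 (2 : ℤ_[2]) + verschiebung y →
      ¬ ∃ x : WittVector 2 ℤ_[2], frobenius x = y) := by
  have main : ∀ y : WittVector 2 ℤ_[2],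
      (2 : WittVector 2 ℤ_[2]) = teichmuller 2 (2 : ℤ_[2]) + verschiebung y →
      ¬ ∃ x : WittVector 2 ℤ_[2], frobenius x = y := by
    rintro y hy ⟨x, rfl⟩
    have v1 : ghostComponent 1 (verschiebung (frobenius x)) = 2 * ghostComponent 1 x := by
      have h := ghostComponent_verschiebung (p := 2) (frobenius x) 0
      rw [ghostComponent_frobenius] at h
      simpa using h
    have v2 : ghostComponent 2 (verschiebung (frobenius x)) = 2 * ghostComponent 2 x := by
      have h := ghostComponent_verschiebung (p := 2) (frobenius x) 1
      rw [ghostComponent_frobenius] at h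
      simpa using h
    have h1 := congrArg (ghostComponent 1) hy
    have h2 := congrArg (ghostComponent 2) hy
    rw [map_add, ghostComponent_teichmuller, v1, map_ofNat, ghost1] at h1
    rw [map_add, ghostComponent_teichmuller, v2, map_ofNat, ghost2] at h2
    norm_num at h1 h2
    have h2ne : (2 : ℤ_[2]) ≠ 0 := two_ne_zero
    refine key (x.coeff 0) (x.coeff 1) (x.coeff 2) ?_ ?_
    · exact mul_left_cancel₀ h2ne (by linear_combination -h1)
    · exact mul_left_cancel₀ h2ne (by linear_combination -h2)
  exact ⟨fun ⟨x, hx⟩ => main _ hx ⟨x, rfl⟩, main⟩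
end

section
/- Let m ≥ 2 be an integer and let y ∈ W(ℤ_2) satisfy 2 = [2] + V(y) in W(ℤ_2). Then [2^m]·y lies in the image of the Frobenius; that is, there exists x ∈ W(ℤ_2) with F(x) = [2^m]·y. -/
open WittVector

/-- Let `m ≥ 2` and let `y ∈ W(ℤ_2)` satisfy `2 = [2] + V(y)` in `W(ℤ_2)`.
Then `[2^m]·y` lies in the image of the Frobenius: there is `x ∈ W(ℤ_2)` with
`F(x) = [2^m]·y`. -/
theorem stmt3 (m : ℕ) (hm : 2 ≤ m) (y : WittVector 2 ℤ_[2])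
    (hy : (2 : WittVector 2 ℤ_[2]) = teichmuller 2 (2 : ℤ_[2]) + verschiebung y) :
    ∃ x : WittVector 2 ℤ_[2], frobenius x = teichmuller 2 ((2 : ℤ_[2]) ^ m) * y := by
  set t : WittVector 2 ℤ_[2] := teichmuller 2 (2 : ℤ_[2]) with ht
  have hcast : ((2 : ℕ) : WittVector 2 ℤ_[2]) = 2 := by norm_cast
  have hv : verschiebung y = 2 - t := by rw [hy]; ring
  set w : WittVector 2 ℤ_[2] := y * frobenius y with hw
  -- t * y = 2*y - V w
  have hvw : verschiebung w = verschiebung y * y := verschiebung_mul_frobenius y y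
  have h1 : t * y = 2 * y - verschiebung w := by
    rw [hvw, hv]; ring
  -- t * V a = 2 * (V a - V (y*a))
  have h2 : ∀ a : WittVector 2 ℤ_[2],
      t * verschiebung a = 2 * (verschiebung a - verschiebung (y * a)) := by
    intro a
    have hfa : verschiebung (y * frobenius (verschiebung a))
        = verschiebung y * verschiebung a := verschiebung_mul_frobenius y (verschiebung a)
    have hF : frobenius (verschiebung a) = a * 2 := by
      rw [frobenius_verschiebung, hcast]
    have hya : verschiebung (y * (a * 2)) = 2 * verschiebung (y * a) := by
      have : y * (a * 2) = y * a + y * a := by ring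
      rw [this, map_add]; ring
    rw [hF] at hfa
    rw [hya] at hfa
    -- hfa : 2 * V (y*a) = V y * V a
    rw [hv] at hfa
    -- hfa : 2 * V (y*a) = (2 - t) * V a
    linear_combination hfa
  obtain ⟨k, rfl⟩ : ∃ k, m = k + 2 := ⟨m - 2, by omega⟩
  refine ⟨verschiebung (t ^ (k + 1) * y
      - t ^ k * (verschiebung w - verschiebung (y * w))), ?_⟩
  rw [frobenius_verschiebung, hcast, map_pow]
  linear_combination (-(t ^ (k + 1))) * h1 + t ^ k * h2 w
end

section
/- Let p be a prime and n ≥ 1. In the ring W(ℤ/p^n) of p-typical Witt vectors of ℤ/p^n, one has p^n = V(p^{n−1}), where p^n and p^{n−1} denote the images of these integers under the unique ring map ℤ → W(ℤ/p^n). Consequently, for n ≥ 2 one also has p^n = V(F(V(p^{n−2}))) in W(ℤ/p^n); in particular p^n lies in the image of V∘F. -/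
/-!
Over `ℤ`, the Witt vector `p^n - V(p^(n-1))` has ghost components `(p^n, 0, 0, …)`, since
`w_(k+1) ∘ V = p • w_k`. Ghost components divisible by `p^(n+k)` force all Witt coordinates to
be divisible by `p^n`, so this Witt vector vanishes in `W(ℤ/p^n)`. The second claim follows
from `F ∘ V = (· * p)`.
-/

open Finset

theorem pow_add_add_dvd_pow_mul_pow_pow {R : Type*} [CommMonoid R] {π a : R} {n : ℕ}
    (hn : 1 ≤ n) (ha : π ^ n ∣ a) {p : ℕ} (hp : 1 < p) (i j : ℕ) : π ^ (n + i + j) ∣ π ^ i * a ^ p ^ j := by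
  have hexp : n + j ≤ n * p ^ j := calc
    n + j ≤ n * (j + 1) := by nlinarith
    _ ≤ n * p ^ j := Nat.mul_le_mul_left n (Nat.lt_pow_self hp)
  calc π ^ (n + i + j) ∣ π ^ i * π ^ (n * p ^ j) := by
        rw [← pow_add]; exact pow_dvd_pow π (by omega)
    _ ∣ π ^ i * a ^ p ^ j := by
        rw [pow_mul]; exact mul_dvd_mul_left _ (pow_dvd_pow_of_dvd ha _)

namespace WittVector

variable {p : ℕ} [hp : Fact p.Prime]

/-- Solve `w_k = ∑ p^i x_i^(p^(k-i))` for `p^k x_k`; by induction every lower term is divisible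
by `p^(n+k)`. -/
theorem pow_dvd_coeff_of_pow_dvd_ghostComponent {R : Type*} [CommRing R] [IsDomain R]
    [CharZero R] {x : WittVector p R} {n : ℕ}
    (h : ∀ k, (p : R) ^ (n + k) ∣ ghostComponent k x) (k : ℕ) : (p : R) ^ n ∣ x.coeff k := by
  obtain rfl | hn := n.eq_zero_or_pos
  · simp
  induction k using Nat.strong_induction_on with
  | _ k ih =>
    have hghost := h k
    rw [ghostComponent_apply, aeval_wittPolynomial, sum_range_succ, Nat.sub_self, pow_zero,
      pow_one] at hghost
    have hlower : (p : R) ^ (n + k) ∣ ∑ i ∈ range k, (p : R) ^ i * x.coeff i ^ p ^ (k - i) := by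
      refine dvd_sum fun i hi => ?_
      have hik := mem_range.mp hi
      have := pow_add_add_dvd_pow_mul_pow_pow hn (ih i hik) hp.out.one_lt i (k - i)
      rwa [show n + i + (k - i) = n + k by omega] at this
    have htop : (p : R) ^ k * (p : R) ^ n ∣ (p : R) ^ k * x.coeff k := by
      rw [← pow_add, add_comm]
      exact (dvd_add_right hlower).mp hghost
    exact (mul_dvd_mul_iff_left (pow_ne_zero _ (Nat.cast_ne_zero.mpr hp.out.ne_zero))).mp htop

theorem map_intCastRingHom_eq_zero_iff {m : ℕ} {x : WittVector p ℤ} :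
    map (Int.castRingHom (ZMod m)) x = 0 ↔ ∀ k, (m : ℤ) ∣ x.coeff k := by
  simp only [WittVector.ext_iff, map_coeff, zero_coeff, eq_intCast,
    ZMod.intCast_zmod_eq_zero_iff_dvd]

theorem ghostComponent_natCast_pow_sub_verschiebung {R : Type*} [CommRing R] (m k : ℕ) :
    ghostComponent k (((p ^ (m + 1) : ℕ) : WittVector p R) - verschiebung (p ^ m : ℕ)) =
      if k = 0 then (p : R) ^ (m + 1) else 0 := by
  cases k with
  | zero => simp [ghostComponent_zero_verschiebung]
  | succ k => simp [ghostComponent_verschiebung, pow_succ']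

theorem natCast_pow_succ_eq_verschiebung (m : ℕ) :
    ((p ^ (m + 1) : ℕ) : WittVector p (ZMod (p ^ (m + 1)))) =
      verschiebung ((p ^ m : ℕ) : WittVector p (ZMod (p ^ (m + 1)))) := by
  have hd : map (Int.castRingHom (ZMod (p ^ (m + 1))))
      (((p ^ (m + 1) : ℕ) : WittVector p ℤ) - verschiebung (p ^ m : ℕ)) = 0 := by
    refine map_intCastRingHom_eq_zero_iff.mpr (pow_dvd_coeff_of_pow_dvd_ghostComponent fun k => ?_)
    rw [ghostComponent_natCast_pow_sub_verschiebung]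
    split_ifs with hk
    · simp [hk]
    · exact dvd_zero _
  rwa [map_sub, map_natCast, map_verschiebung, map_natCast, sub_eq_zero] at hd

theorem frobenius_verschiebung_natCast_pow {R : Type*} [CommRing R] (m : ℕ) :
    frobenius (verschiebung ((p ^ m : ℕ) : WittVector p R)) = (p ^ (m + 1) : ℕ) := by
  rw [frobenius_verschiebung]; push_cast; ring

end WittVector

open WittVector

/-- Let `p` be a prime and `n ≥ 1`. In `W(ℤ/p^n)` one has `p^n = V(p^(n−1))`.
Consequently, for `n ≥ 2` one also has `p^n = V(F(V(p^(n−2))))` in `W(ℤ/p^n)`;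
in particular `p^n` lies in the image of `V ∘ F`. -/
theorem stmt4 (p : ℕ) [Fact p.Prime] (n : ℕ) (hn : 1 ≤ n) :
    ((p ^ n : ℕ) : WittVector p (ZMod (p ^ n))) =
      verschiebung ((p ^ (n - 1) : ℕ) : WittVector p (ZMod (p ^ n))) ∧
    (2 ≤ n →
      ((p ^ n : ℕ) : WittVector p (ZMod (p ^ n))) =
        verschiebung (frobenius (verschiebung
          ((p ^ (n - 2) : ℕ) : WittVector p (ZMod (p ^ n))))) ∧
      ∃ z : WittVector p (ZMod (p ^ n)),
        verschiebung (frobenius z) = ((p ^ n : ℕ) : WittVector p (ZMod (p ^ n)))) := by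
  have hV : ((p ^ n : ℕ) : WittVector p (ZMod (p ^ n))) = verschiebung (p ^ (n - 1) : ℕ) := by
    obtain ⟨m, rfl⟩ := Nat.exists_eq_add_of_le' hn
    exact natCast_pow_succ_eq_verschiebung m
  refine ⟨hV, fun h2 => ?_⟩
  have hFV : frobenius (verschiebung ((p ^ (n - 2) : ℕ) : WittVector p (ZMod (p ^ n)))) =
      (p ^ (n - 1) : ℕ) := by
    rw [frobenius_verschiebung_natCast_pow, show n - 2 + 1 = n - 1 by omega]
  exact ⟨by rw [hFV, hV], _, by rw [hFV, hV]⟩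
end

section
/- Let p be a prime, n ≥ 1, and let y ∈ W(ℤ_p) satisfy p = [p] + V(y) in W(ℤ_p). Let ȳ denote the image of y in W(ℤ/p^n) under the map induced by the projection ℤ_p → ℤ/p^n. Then in W(ℤ/p^n) one has ∑_{i=0}^{n−1} C(n,i) · p^{n−i−1} · ȳ^{n−i} · [p]^{p·i} = p^{n−1}, where C(n,i) is the binomial coefficient and [p] is the Teichmüller representative of the class of p in ℤ/p^n. -/
open WittVector

section Aux

variable {p : ℕ} [hp : Fact p.Prime]

private theorem map_frobenius' {R S : Type} [CommRing R] [CommRing S] (g : R →+* S)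
    (x : WittVector p R) :
    WittVector.map g (frobenius x) = frobenius (WittVector.map g x) :=
  IsPoly.map (WittVector.frobenius_isPoly p) g x

private theorem frob_teich_aux₁ {R : Type} [CommRing R] (r : MvPolynomial R ℚ) :
    frobenius (teichmuller p r) = teichmuller p r ^ p := by
  apply (ghostMap.bijective_of_invertible p (MvPolynomial R ℚ)).1
  rw [RingHom.map_pow]
  ext1 n
  simp only [Pi.pow_apply, ghostMap_apply, ghostComponent_frobenius,
    ghostComponent_teichmuller, ← pow_mul, pow_succ]

private theorem frob_teich_aux₂ {R : Type} [CommRing R] (r : MvPolynomial R ℤ) :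
    frobenius (teichmuller p r) = teichmuller p r ^ p := by
  refine map_injective (MvPolynomial.map (Int.castRingHom ℚ))
    (MvPolynomial.map_injective _ Int.cast_injective) ?_
  rw [RingHom.map_pow, map_frobenius', map_teichmuller, frob_teich_aux₁]

theorem frobenius_teichmuller' {R : Type} [CommRing R] (r : R) :
    frobenius (teichmuller p r) = teichmuller p r ^ p := by
  rcases MvPolynomial.counit_surjective R r with ⟨r, rfl⟩
  rw [← map_teichmuller, ← map_frobenius', frob_teich_aux₂, RingHom.map_pow]

private theorem sum_aux {S : Type} [CommRing S] (n : ℕ) (z : S) :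
    ∑ i ∈ Finset.range n, (n.choose i : S) * z ^ (n - i) * (1 - z) ^ i
      = 1 - (1 - z) ^ n := by
  have h : (1 : S) ^ n
      = ∑ k ∈ Finset.range (n + 1), z ^ k * (1 - z) ^ (n - k) * (n.choose k : S) := by
    have := add_pow z (1 - z) n
    rw [show z + (1 - z) = 1 by ring] at this
    exact this
  rw [Finset.sum_range_succ'] at h
  simp only [pow_zero, one_mul, one_pow, Nat.choose_zero_right, Nat.cast_one, mul_one,
    Nat.sub_zero] at h
  rw [← Finset.sum_range_reflect] at h
  have e : ∑ i ∈ Finset.range n, (n.choose i : S) * z ^ (n - i) * (1 - z) ^ i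
      = ∑ i ∈ Finset.range n,
          z ^ (n - 1 - i + 1) * (1 - z) ^ (n - (n - 1 - i + 1))
            * (n.choose (n - 1 - i + 1) : S) := by
    apply Finset.sum_congr rfl
    intro i hi
    rw [Finset.mem_range] at hi
    have h1 : n - 1 - i + 1 = n - i := by omega
    have h2 : n - (n - i) = i := by omega
    rw [h1, h2, Nat.choose_symm (by omega : i ≤ n)]
    ring
  rw [e]
  linear_combination -h

private theorem versch_inj {R : Type} [CommRing R] {x z : WittVector p R}
    (h : verschiebung x = verschiebung z) : x = z := by
  ext m
  have := congrArg (fun w : WittVector p R => w.coeff (m + 1)) h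
  simpa [verschiebung_coeff_succ] using this

theorem stmt6_aux (p : ℕ) [Fact p.Prime] (n : ℕ) (hn : 1 ≤ n) (R : Type) [CommRing R]
    [CharP R (p ^ n)] (z : WittVector p R)
    (h1 : (p : WittVector p R) = teichmuller p (p : R) + verschiebung z) :
    ∑ i ∈ Finset.range n,
      (Nat.choose n i : WittVector p R) * (p : WittVector p R) ^ (n - i - 1)
        * z ^ (n - i) * (teichmuller p ((p : R))) ^ (p * i)
      = (p : WittVector p R) ^ (n - 1) := by
  have h2 : (teichmuller p ((p : R))) ^ p = (p : WittVector p R) * (1 - z) := by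
    have := congrArg (frobenius (p := p)) h1
    rw [map_natCast, map_add, frobenius_verschiebung, frobenius_teichmuller'] at this
    linear_combination -this
  have hterm : ∀ i ∈ Finset.range n,
      (Nat.choose n i : WittVector p R) * (p : WittVector p R) ^ (n - i - 1)
          * z ^ (n - i) * (teichmuller p ((p : R))) ^ (p * i)
        = (p : WittVector p R) ^ (n - 1)
            * ((Nat.choose n i : WittVector p R) * z ^ (n - i) * (1 - z) ^ i) := by
    intro i hi
    rw [Finset.mem_range] at hi
    have hp' : (p : WittVector p R) ^ (n - 1)
        = (p : WittVector p R) ^ (n - i - 1) * (p : WittVector p R) ^ i := by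
      rw [← pow_add]; congr 1; omega
    rw [pow_mul, h2, mul_pow, hp']
    ring
  rw [Finset.sum_congr rfl hterm, ← Finset.mul_sum, sum_aux]
  have hzero : (p : WittVector p R) ^ (n - 1) * (1 - z) ^ n = 0 := by
    rcases Nat.lt_or_ge n 2 with h | h
    · -- n = 1
      obtain rfl : n = 1 := by omega
      haveI : CharP R p := (pow_one p) ▸ ‹CharP R (p ^ 1)›
      have hA0 : teichmuller p ((p : R)) = 0 := by
        rw [show ((p : R)) = 0 from CharP.cast_eq_zero R p, teichmuller_zero]
      have hp1 : (p : WittVector p R) = verschiebung (1 : WittVector p R) := by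
        have := verschiebung_frobenius (p := p) (1 : WittVector p R)
        rw [map_one, one_mul] at this
        exact this.symm
      have hv : verschiebung z = verschiebung (1 : WittVector p R) := by
        rw [← hp1, h1, hA0, zero_add]
      have hz1 : z = 1 := versch_inj hv
      simp [hz1]
    · -- n ≥ 2
      have key : (p : WittVector p R) ^ (n - 1) * (1 - z) ^ (n - 1) = 0 := by
        rw [← mul_pow, ← h2, ← pow_mul, ← map_pow]
        have hz0 : ((p : R)) ^ (p * (n - 1)) = 0 := by
          have hkn : n ≤ p * (n - 1) := by
            have hp2 : 2 ≤ p := (Fact.out : p.Prime).two_le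
            nlinarith [Nat.sub_add_cancel (le_trans one_le_two h)]
          have h0 : ((p : R)) ^ n = 0 := by
            rw [← Nat.cast_pow]; exact CharP.cast_eq_zero R (p ^ n)
          calc ((p : R)) ^ (p * (n - 1))
              = ((p : R)) ^ n * ((p : R)) ^ (p * (n - 1) - n) := by
                rw [← pow_add]; congr 1; omega
            _ = 0 := by rw [h0, zero_mul]
        rw [hz0, teichmuller_zero]
      calc (p : WittVector p R) ^ (n - 1) * (1 - z) ^ n
          = ((p : WittVector p R) ^ (n - 1) * (1 - z) ^ (n - 1)) * (1 - z) := by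
            rw [mul_assoc, ← pow_succ]
            congr 2
            omega
        _ = 0 := by rw [key, zero_mul]
  rw [mul_sub, mul_one, hzero, sub_zero]

end Aux

/-- Let `p` be a prime, `n ≥ 1`, and let `y ∈ W(ℤ_p)` satisfy `p = [p] + V(y)` in
`W(ℤ_p)`. Let `ȳ` be the image of `y` in `W(ℤ/p^n)`. Then in `W(ℤ/p^n)` one has
`∑_{i=0}^{n−1} C(n,i) · p^(n−i−1) · ȳ^(n−i) · [p]^(p·i) = p^(n−1)`. -/
theorem stmt6 (p : ℕ) [Fact p.Prime] (n : ℕ) (hn : 1 ≤ n)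
    (y : WittVector p ℤ_[p])
    (hy : (p : WittVector p ℤ_[p]) = teichmuller p (p : ℤ_[p]) + verschiebung y) :
    ∑ i ∈ Finset.range n,
      (Nat.choose n i : WittVector p (ZMod (p ^ n))) *
        (p : WittVector p (ZMod (p ^ n))) ^ (n - i - 1) *
        (WittVector.map (PadicInt.toZModPow n) y) ^ (n - i) *
        (teichmuller p ((p : ZMod (p ^ n)))) ^ (p * i) =
      (p : WittVector p (ZMod (p ^ n))) ^ (n - 1) := by
  apply stmt6_aux p n hn (ZMod (p ^ n)) (WittVector.map (PadicInt.toZModPow n) y)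
  have := congrArg (WittVector.map (p := p) (PadicInt.toZModPow n)) hy
  simpa [map_verschiebung, map_natCast] using this
end

section
/- Let p be a prime, n ≥ 1, and let R be a commutative ring in which p^n = 0. Then there exists z ∈ W(R) with V(F(z)) = p^n in W(R) (where p^n denotes the image of the integer p^n in W(R)). Moreover, the set of all such z is a coset of ker(F): if z is a solution, then z' is a solution if and only if F(z − z') = 0. -/
/-!
Since `V (x * F y) = V x * y`, we have `V (F z) = V 1 * z`, so the question is when
`V 1 * z = p * z`. The difference `u = p - V 1` kills the image of `V` (as `V 1 * V s = V (F (V s))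
= V (s * p)`), and its coordinates are all divisible by `p`, because `u` vanishes in `W (ZMod p)`
and is defined over `ℤ`. Hence `u` also kills `[a]` whenever `p * a = 0`, and writing
`z = [z₀] + V s` gives `V (F z) = p * z` as soon as `p * z₀ = 0`. For `z = p ^ (n - 1)` this is
exactly the hypothesis `p ^ n = 0`. The description of all solutions follows from the
injectivity of `V`.
-/

open WittVector

namespace WittVector

variable {p : ℕ} [hp : Fact p.Prime] {R : Type*} [CommRing R]

local notation "𝕎" => WittVector p

theorem frobenius_teichmuller (r : R) :
    frobenius (teichmuller p r) = teichmuller p (r ^ p) := by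
  obtain ⟨x, rfl⟩ := MvPolynomial.counit_surjective R r
  rw [← map_teichmuller, ← (frobenius_isPoly p).map, ← map_pow, ← map_teichmuller]
  congr 1
  refine map_injective (MvPolynomial.map (Int.castRingHom ℚ))
    (MvPolynomial.map_injective _ Int.cast_injective) ?_
  rw [(frobenius_isPoly p).map, map_teichmuller, map_teichmuller, map_pow]
  refine (ghostMap.bijective_of_invertible p _).1 (funext fun n => ?_)
  simp only [ghostMap_apply, ghostComponent_frobenius, ghostComponent_teichmuller, ← pow_mul,
    pow_succ']

theorem teichmuller_add_verschiebung_shift (x : 𝕎 R) :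
    teichmuller p (x.coeff 0) + verschiebung (x.shift 1) = x := by
  ext n
  rw [coeff_add_of_disjoint]
  · rcases n with _ | n <;> simp [shift_coeff, add_comm]
  · rintro (_ | n) <;> simp

theorem teichmuller_mul_eq_zero {r : R} {x : 𝕎 R} (h : ∀ i, r * x.coeff i = 0) :
    teichmuller p r * x = 0 := by
  ext n
  rw [zero_coeff]
  induction n generalizing r x with
  | zero => rw [mul_coeff_zero, teichmuller_coeff_zero, h 0]
  | succ n ih =>
    have hshift : ∀ i, r ^ p * (x.shift 1).coeff i = 0 := fun i => by
      obtain ⟨t, ht⟩ := dvd_pow_self r hp.out.ne_zero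
      rw [ht, mul_right_comm, shift_coeff, h, zero_mul]
    rw [← teichmuller_add_verschiebung_shift x, mul_add, ← map_mul, h 0, teichmuller_zero,
      zero_add, mul_comm, ← verschiebung_mul_frobenius, frobenius_teichmuller,
      verschiebung_coeff_succ, mul_comm, ih hshift]

theorem p_dvd_coeff_natCast_sub_verschiebung_one (i : ℕ) :
    (p : R) ∣ ((p : 𝕎 R) - verschiebung 1).coeff i := by
  have hzmod : map (Int.castRingHom (ZMod p)) ((p : 𝕎 ℤ) - verschiebung 1) = 0 := by
    rw [map_sub, map_natCast, map_verschiebung, map_one, verschiebung_zmod, one_mul, sub_self]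
  have hℤ : (p : ℤ) ∣ ((p : 𝕎 ℤ) - verschiebung 1).coeff i := by
    rw [← ZMod.intCast_zmod_eq_zero_iff_dvd, ← eq_intCast (Int.castRingHom (ZMod p)),
      ← map_coeff, hzmod, zero_coeff]
  have hmap : map (Int.castRingHom R) ((p : 𝕎 ℤ) - verschiebung 1) =
      (p : 𝕎 R) - verschiebung 1 := by
    rw [map_sub, map_natCast, map_verschiebung, map_one]
  rw [← hmap, map_coeff]
  simpa using (Int.castRingHom R).map_dvd hℤ

theorem verschiebung_frobenius_of_p_mul_coeff_zero {x : 𝕎 R}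
    (hx : (p : R) * x.coeff 0 = 0) :
    verschiebung (frobenius x) = x * p := by
  have hteich : ((p : 𝕎 R) - verschiebung 1) * teichmuller p (x.coeff 0) = 0 := by
    rw [mul_comm]
    refine teichmuller_mul_eq_zero fun i => ?_
    obtain ⟨c, hc⟩ := p_dvd_coeff_natCast_sub_verschiebung_one (p := p) (R := R) i
    rw [hc, mul_left_comm, ← mul_assoc, hx, zero_mul]
  have hvers : ((p : 𝕎 R) - verschiebung 1) * verschiebung (x.shift 1) = 0 := by
    have h : verschiebung 1 * verschiebung (x.shift 1) =
        verschiebung (x.shift 1) * (p : 𝕎 R) := by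
      rw [← verschiebung_mul_frobenius, one_mul, frobenius_verschiebung,
        ← verschiebung_mul_frobenius, map_natCast]
    rw [sub_mul, h, mul_comm, sub_self]
  have hkill : ((p : 𝕎 R) - verschiebung 1) * x = 0 := by
    rw [← teichmuller_add_verschiebung_shift x, mul_add, hteich, hvers, add_zero]
  rw [← one_mul (frobenius x), verschiebung_mul_frobenius]
  linear_combination -hkill

end WittVector

/-- Let `p` be a prime, `n ≥ 1`, and let `R` be a commutative ring with `p^n = 0` in `R`.
Then there exists `z ∈ W(R)` with `V(F(z)) = p^n` in `W(R)`. Moreover the set of all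
such `z` is a coset of `ker F`: if `z` is a solution, then `z'` is a solution if and
only if `F(z − z') = 0`. -/
theorem stmt7 (p : ℕ) [Fact p.Prime] (n : ℕ) (hn : 1 ≤ n)
    (R : Type*) [CommRing R] (hR : ((p ^ n : ℕ) : R) = 0) :
    (∃ z : WittVector p R,
      verschiebung (frobenius z) = ((p ^ n : ℕ) : WittVector p R)) ∧
    (∀ z : WittVector p R,
      verschiebung (frobenius z) = ((p ^ n : ℕ) : WittVector p R) →
      ∀ z' : WittVector p R,
        (verschiebung (frobenius z') = ((p ^ n : ℕ) : WittVector p R) ↔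
          frobenius (z - z') = 0)) := by
  refine ⟨⟨p ^ (n - 1), ?_⟩, fun z hz z' => ?_⟩
  · have hcoeff : (p : R) * ((p : WittVector p R) ^ (n - 1)).coeff 0 = 0 := by
      rw [← constantCoeff_apply, map_pow, map_natCast, ← pow_succ', Nat.sub_add_cancel hn,
        ← Nat.cast_pow, hR]
    rw [verschiebung_frobenius_of_p_mul_coeff_zero hcoeff, ← pow_succ, Nat.sub_add_cancel hn,
      Nat.cast_pow]
  · rw [map_sub, sub_eq_zero, ← hz, (verschiebung_injective p R).eq_iff, eq_comm]
end

section
/- Let p be an odd prime. There exists a sequence (x_i)_{i≥0} of p-adic integers with x_i ∈ pℤ_p for every i ≥ 1, such that for every n ≥ 1 one has ∑_{i=0}^{n} p^i · x_i^{p^{n−i}} = 1 − p^{p^n − 1} in ℤ_p. -/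
/-!
Take `x₀ = 1` and `xₙ = p yₙ` for `n ≥ 1`; the `n`-th equation then reads
`p ^ (n + 1) * yₙ = 1 - p ^ (p ^ n - 1) - ∑_{i < n} p ^ i * xᵢ ^ p ^ (n - i)`, which can be solved
for `yₙ` because the right-hand side is divisible by `p ^ (n + 1)`: the `i = 0` term is `1`, the
term of index `0 < i < n` is divisible by `p ^ (i + p ^ (n - i))`, and `p ^ n - 1 ≥ n + 1` as `p ≥ 3`.
-/

open Finset

theorem exists_seq_forall_eq_of_prefix_congr {α : Type*} [Nonempty α]
    (c : ℕ → (ℕ → α) → α) (hc : ∀ n y y', (∀ i < n, y i = y' i) → c n y = c n y') :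
    ∃ y : ℕ → α, ∀ n, y n = c n y := by
  let y : ℕ → α := Nat.strongRec fun n prev =>
    c n fun i => if h : i < n then prev i h else Classical.arbitrary α
  refine ⟨y, fun n => ?_⟩
  rw [show y n = _ from Nat.strongRec_eq _ n]
  exact hc n _ _ fun i hi => dif_pos hi

section GhostEquations

variable {R : Type*} [CommRing R] {π : R} {q : ℕ}

theorem pow_succ_dvd_sum_Ico_pow_mul_pow (hq : 1 < q) {x : ℕ → R} {n : ℕ}
    (hx : ∀ i ∈ Ico 1 n, π ∣ x i) :
    π ^ (n + 1) ∣ ∑ i ∈ Ico 1 n, π ^ i * x i ^ q ^ (n - i) := by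
  refine dvd_sum fun i hi => ?_
  have hin := (mem_Ico.mp hi).2
  have hexp : n + 1 ≤ i + q ^ (n - i) := by
    have := Nat.lt_pow_self (n := n - i) hq
    omega
  calc π ^ (n + 1) ∣ π ^ i * π ^ q ^ (n - i) := pow_add π _ _ ▸ pow_dvd_pow π hexp
    _ ∣ π ^ i * x i ^ q ^ (n - i) := mul_dvd_mul_left _ (pow_dvd_pow_of_dvd (hx i hi) _)

theorem exists_sum_pow_mul_pow_eq (hq : 1 < q) (a : R) {t : ℕ → R}
    (ht : ∀ n, 1 ≤ n → π ^ (n + 1) ∣ t n - a ^ q ^ n) :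
    ∃ x : ℕ → R, x 0 = a ∧ (∀ i, 1 ≤ i → π ∣ x i) ∧
      ∀ n, 1 ≤ n → ∑ i ∈ range (n + 1), π ^ i * x i ^ q ^ (n - i) = t n := by
  choose! quot hquot using fun (n : ℕ) (r : R) (h : π ^ (n + 1) ∣ r) => h
  let c : ℕ → (ℕ → R) → R := fun n x =>
    if n = 0 then a else π * quot n (t n - ∑ i ∈ range n, π ^ i * x i ^ q ^ (n - i))
  obtain ⟨x, hx⟩ := exists_seq_forall_eq_of_prefix_congr c fun n y y' h => by
    simp only [c, sum_congr rfl fun i hi =>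
      congrArg (π ^ i * · ^ q ^ (n - i)) (h i (mem_range.mp hi))]
  have hx0 : x 0 = a := by simp [hx 0, c]
  have hdvd : ∀ i, 1 ≤ i → π ∣ x i := fun i hi => by
    rw [hx i]; simp only [c, if_neg (by omega : i ≠ 0)]; exact dvd_mul_right _ _
  refine ⟨x, hx0, hdvd, fun n hn => ?_⟩
  set r := t n - ∑ i ∈ range n, π ^ i * x i ^ q ^ (n - i) with hr
  have hsplit : r = (t n - a ^ q ^ n) - ∑ i ∈ Ico 1 n, π ^ i * x i ^ q ^ (n - i) := by
    rw [hr, range_eq_Ico, sum_eq_sum_Ico_succ_bot (by omega), hx0, pow_zero, one_mul,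
      Nat.sub_zero, sub_add_eq_sub_sub]
  have hrdvd : π ^ (n + 1) ∣ r := hsplit ▸ dvd_sub (ht n hn)
    (pow_succ_dvd_sum_Ico_pow_mul_pow hq fun i hi => hdvd i (mem_Ico.mp hi).1)
  have hxn : x n = π * quot n r := by rw [hx n]; simp only [c, if_neg (by omega : n ≠ 0), hr]
  calc ∑ i ∈ range (n + 1), π ^ i * x i ^ q ^ (n - i)
      = (t n - r) + π ^ (n + 1) * quot n r := by
        rw [sum_range_succ, hxn, Nat.sub_self, pow_zero, pow_one, hr]; ring
    _ = t n := by rw [← hquot n r hrdvd]; ring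

end GhostEquations

theorem add_two_le_pow {p : ℕ} (hp : 3 ≤ p) {n : ℕ} (hn : 1 ≤ n) : n + 2 ≤ p ^ n := by
  have h := one_add_mul_le_pow (show (-2 : ℤ) ≤ 2 by norm_num) n
  norm_num at h
  have : 1 + n * 2 ≤ 3 ^ n := by exact_mod_cast h
  have := Nat.pow_le_pow_left hp n
  omega

/-- Let `p` be an odd prime. There exists a sequence `(x_i)` of `p`-adic integers with
`x_i ∈ pℤ_p` for every `i ≥ 1`, such that for every `n ≥ 1` one has
`∑_{i=0}^{n} p^i · x_i^(p^(n−i)) = 1 − p^(p^n − 1)` in `ℤ_p`. -/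
theorem stmt12 (p : ℕ) [Fact p.Prime] (hp : Odd p) :
    ∃ x : ℕ → ℤ_[p],
      (∀ i : ℕ, 1 ≤ i → (p : ℤ_[p]) ∣ x i) ∧
      ∀ n : ℕ, 1 ≤ n →
        ∑ i ∈ Finset.range (n + 1), (p : ℤ_[p]) ^ i * (x i) ^ (p ^ (n - i)) =
          1 - (p : ℤ_[p]) ^ (p ^ n - 1) := by
  have hp3 : 3 ≤ p := by
    have := (Fact.out : p.Prime).two_le
    obtain ⟨k, rfl⟩ := hp
    omega
  have ht : ∀ n, 1 ≤ n → (p : ℤ_[p]) ^ (n + 1) ∣ (1 - (p : ℤ_[p]) ^ (p ^ n - 1)) - 1 ^ p ^ n :=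
    fun n hn => by
      rw [one_pow, sub_sub_cancel_left, dvd_neg]
      exact pow_dvd_pow _ (by have := add_two_le_pow hp3 hn; omega)
  obtain ⟨x, -, hx, hsum⟩ := exists_sum_pow_mul_pow_eq (by omega : 1 < p) 1 ht
  exact ⟨x, hx, hsum⟩
end

section
/- Let m ≥ 2 be an integer. There exists a sequence (x_i)_{i≥0} of 2-adic integers with x_i ∈ 2ℤ_2 for every i ≥ 0, such that for every n ≥ 1 one has ∑_{i=0}^{n} 2^i · x_i^{2^{n−i}} = 2^{m·2^{n−1}} · (1 − 2^{2^n − 1}) in ℤ_2. -/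
/-!
The equations are triangular: the `n`-th one reads `2^n x_n = t_n - ∑_{i<n} 2^i x_i^{2^{n-i}}`,
so `x_n` is determined by `x_0, …, x_{n-1}`. If all earlier `x_i` are even, each term of the sum
is divisible by `2^{i + 2^{n-i}}`, hence by `2^{n+1}`; and for `m ≥ 2` so is the right-hand side
`t_n`, because `m 2^{n-1} ≥ n + 1`. Thus `x_n` exists and is again even. The same works in any
commutative ring with any `π` in place of `2` and any exponent base `q ≥ 2`.
-/

open Finset

namespace GhostLift

variable {R : Type*} [CommRing R] (π : R) (q : ℕ)

theorem pow_succ_dvd_sum_of_dvd {n : ℕ} (hq : 2 ≤ q) (x : Fin n → R)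
    (hx : ∀ i, π ∣ x i) :
    π ^ (n + 1) ∣ ∑ i : Fin n, π ^ (i : ℕ) * x i ^ q ^ (n - i) := by
  refine dvd_sum fun i _ => ?_
  have hexp : n + 1 ≤ i + q ^ (n - i) := by
    have := Nat.lt_pow_self (n := n - i) (a := q) (by omega)
    omega
  calc π ^ (n + 1) ∣ π ^ ((i : ℕ) + q ^ (n - i)) := pow_dvd_pow π hexp
    _ = π ^ (i : ℕ) * (π ^ q ^ (n - i)) := pow_add _ _ _
    _ ∣ π ^ (i : ℕ) * x i ^ q ^ (n - i) := mul_dvd_mul_left _ (pow_dvd_pow_of_dvd (hx i) _)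

variable {t : ℕ → R}

/-- The solution `x_n = π c_n`, where `π^{n+1} c_n = t_n - ∑_{i<n} π^i x_i^{q^{n-i}}`. -/
noncomputable def solution (hq : 2 ≤ q) (ht : ∀ n, π ^ (n + 1) ∣ t n) (n : ℕ) :
    {a : R // π ∣ a} :=
  ⟨π * Classical.choose (dvd_sub (ht n) (pow_succ_dvd_sum_of_dvd π q hq
    (fun i : Fin n => (solution hq ht i).1) fun i => (solution hq ht i).2)), dvd_mul_right _ _⟩
termination_by n
decreasing_by all_goals exact i.2

theorem pow_mul_solution (hq : 2 ≤ q) (ht : ∀ n, π ^ (n + 1) ∣ t n) (n : ℕ) :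
    π ^ n * (solution π q hq ht n).1 =
      t n - ∑ i ∈ range n, π ^ i * (solution π q hq ht i).1 ^ q ^ (n - i) := by
  rw [solution,
    ← Fin.sum_univ_eq_sum_range fun i => π ^ i * (solution π q hq ht i).1 ^ q ^ (n - i)]
  generalize_proofs h
  exact (h.choose_spec.trans (by ring)).symm

theorem sum_solution (hq : 2 ≤ q) (ht : ∀ n, π ^ (n + 1) ∣ t n) (n : ℕ) :
    ∑ i ∈ range (n + 1), π ^ i * (solution π q hq ht i).1 ^ q ^ (n - i) = t n := by
  rw [sum_range_succ, Nat.sub_self, pow_zero, pow_one, pow_mul_solution]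
  ring

theorem exists_sum_eq (hq : 2 ≤ q) (ht : ∀ n, π ^ (n + 1) ∣ t n) :
    ∃ x : ℕ → R, (∀ i, π ∣ x i) ∧
      ∀ n, ∑ i ∈ range (n + 1), π ^ i * x i ^ q ^ (n - i) = t n :=
  ⟨fun i => (solution π q hq ht i).1, fun i => (solution π q hq ht i).2,
    sum_solution π q hq ht⟩

end GhostLift

theorem succ_le_mul_two_pow_pred {m : ℕ} (hm : 2 ≤ m) (n : ℕ) :
    n + 1 ≤ m * 2 ^ (n - 1) := by
  rcases n with _ | k
  · simpa using (by omega : 1 ≤ m)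
  · calc k + 1 + 1 ≤ 2 ^ (k + 1) := Nat.lt_two_pow_self
      _ = 2 * 2 ^ k := by ring
      _ ≤ m * 2 ^ (k + 1 - 1) := by simpa using Nat.mul_le_mul_right (2 ^ k) hm

/-- Let `m ≥ 2`. There exists a sequence `(x_i)` of 2-adic integers with `x_i ∈ 2ℤ₂`
for every `i ≥ 0`, such that for every `n ≥ 1` one has
`∑_{i=0}^{n} 2^i · x_i^(2^(n−i)) = 2^(m·2^(n−1)) · (1 − 2^(2^n − 1))` in `ℤ₂`. -/
theorem stmt14 (m : ℕ) (hm : 2 ≤ m) :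
    ∃ x : ℕ → ℤ_[2],
      (∀ i : ℕ, (2 : ℤ_[2]) ∣ x i) ∧
      ∀ n : ℕ, 1 ≤ n →
        ∑ i ∈ Finset.range (n + 1), (2 : ℤ_[2]) ^ i * (x i) ^ (2 ^ (n - i)) =
          (2 : ℤ_[2]) ^ (m * 2 ^ (n - 1)) * (1 - (2 : ℤ_[2]) ^ (2 ^ n - 1)) := by
  obtain ⟨x, hx, hsum⟩ := GhostLift.exists_sum_eq (2 : ℤ_[2]) 2 le_rfl
    (t := fun n => 2 ^ (m * 2 ^ (n - 1)) * (1 - 2 ^ (2 ^ n - 1)))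
    fun n => (pow_dvd_pow 2 (succ_le_mul_two_pow_pred hm n)).mul_right _
  exact ⟨x, hx, fun n _ => hsum n⟩
end
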